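/- Let u, ψ : ℝ × ℝ → ℍ be smooth with u_t = [[u,u_x],u] + u_xxx (the commutator mKdV-type equation, obtained from the first mKdV family at β = 2, α = 1) and ψ_t = u_xx*ψ + [u,u_x]*ψ. Then the function φ := ψ_x − u*ψ satisfies φ_t = u_xx*φ + [u,u_x]*φ. (Here [[u,u_x],u] = 2u*u_x*u − u²*u_x − u_x*u².) -/

import Mathlib

/-- Partial derivative in `t` (the first coordinate). -/
noncomputable def pt (f : ℝ × ℝ → Quaternion ℝ) : ℝ × ℝ → Quaternion ℝ :=
  fun p => deriv (fun s => f (s, p.2)) p.1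

/-- Partial derivative in `x` (the second coordinate). -/
noncomputable def px (f : ℝ × ℝ → Quaternion ℝ) : ℝ × ℝ → Quaternion ℝ :=
  fun p => deriv (fun y => f (p.1, y)) p.2

section helpers
variable {f g : ℝ × ℝ → Quaternion ℝ}

variable {f g : ℝ × ℝ → Quaternion ℝ}

lemma hasDerivAt_sliceT (hf : ContDiff ℝ (⊤ : ℕ∞) f) (t c : ℝ) :
    HasDerivAt (fun s => f (s, c)) (fderiv ℝ f (t, c) (1, 0)) t :=
  (hf.differentiable (by simp) (t, c)).hasFDerivAt.comp_hasDerivAt t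
    ((hasDerivAt_id t).prodMk (hasDerivAt_const t c))

lemma hasDerivAt_sliceX (hf : ContDiff ℝ (⊤ : ℕ∞) f) (t c : ℝ) :
    HasDerivAt (fun y => f (t, y)) (fderiv ℝ f (t, c) (0, 1)) c :=
  (hf.differentiable (by simp) (t, c)).hasFDerivAt.comp_hasDerivAt c
    ((hasDerivAt_const c t).prodMk (hasDerivAt_id c))

lemma pt_eq (hf : ContDiff ℝ (⊤ : ℕ∞) f) (p : ℝ × ℝ) : pt f p = fderiv ℝ f p (1, 0) := by
  have := (hasDerivAt_sliceT hf p.1 p.2).deriv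
  simpa [pt] using this

lemma px_eq (hf : ContDiff ℝ (⊤ : ℕ∞) f) (p : ℝ × ℝ) : px f p = fderiv ℝ f p (0, 1) := by
  have := (hasDerivAt_sliceX hf p.1 p.2).deriv
  simpa [px] using this

lemma contDiff_px (hf : ContDiff ℝ (⊤ : ℕ∞) f) : ContDiff ℝ (⊤ : ℕ∞) (px f) := by
  have : px f = fun p => fderiv ℝ f p (0, 1) := funext (px_eq hf)
  rw [this]
  exact (hf.fderiv_right (by simp)).clm_apply contDiff_const

lemma pt_px_comm (hf : ContDiff ℝ (⊤ : ℕ∞) f) (p : ℝ × ℝ) : pt (px f) p = px (pt f) p := by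
  have hf' : ∀ y, HasFDerivAt f (fderiv ℝ f y) y := fun y =>
    (hf.differentiable (by simp) y).hasFDerivAt
  have hd : ContDiff ℝ (⊤ : ℕ∞) (fderiv ℝ f) := hf.fderiv_right (by simp)
  have hx : HasFDerivAt (fderiv ℝ f) (fderiv ℝ (fderiv ℝ f) p) p :=
    (hd.differentiable (by simp) p).hasFDerivAt
  have hsymm := second_derivative_symmetric hf' hx (1, 0) (0, 1)
  have e1 : px f = fun q => fderiv ℝ f q (0, 1) := funext (px_eq hf)
  have e2 : pt f = fun q => fderiv ℝ f q (1, 0) := funext (pt_eq hf)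
  have c1 : ContDiff ℝ (⊤ : ℕ∞) (px f) := contDiff_px hf
  have c2 : ContDiff ℝ (⊤ : ℕ∞) (pt f) := by
    rw [e2]; exact hd.clm_apply contDiff_const
  have k1 : pt (px f) p = fderiv ℝ (px f) p (1, 0) := pt_eq c1 p
  have k2 : px (pt f) p = fderiv ℝ (pt f) p (0, 1) := px_eq c2 p
  rw [k1, k2, e1, e2]
  rw [fderiv_clm_apply (hd.differentiable (by simp) p) (differentiableAt_const _),
      fderiv_clm_apply (hd.differentiable (by simp) p) (differentiableAt_const _)]
  simp [hsymm]

lemma diff_sliceX (hf : ContDiff ℝ (⊤ : ℕ∞) f) (t c : ℝ) :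
    DifferentiableAt ℝ (fun y => f (t, y)) c := (hasDerivAt_sliceX hf t c).differentiableAt

lemma diff_sliceT (hf : ContDiff ℝ (⊤ : ℕ∞) f) (t c : ℝ) :
    DifferentiableAt ℝ (fun s => f (s, c)) t := (hasDerivAt_sliceT hf t c).differentiableAt

lemma px_mul (hf : ContDiff ℝ (⊤ : ℕ∞) f) (hg : ContDiff ℝ (⊤ : ℕ∞) g) (p : ℝ × ℝ) :
    px (fun q => f q * g q) p = px f p * g p + f p * px g p := by
  simpa [px] using deriv_fun_mul (diff_sliceX hf p.1 p.2) (diff_sliceX hg p.1 p.2)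

lemma pt_mul (hf : ContDiff ℝ (⊤ : ℕ∞) f) (hg : ContDiff ℝ (⊤ : ℕ∞) g) (p : ℝ × ℝ) :
    pt (fun q => f q * g q) p = pt f p * g p + f p * pt g p := by
  simpa [pt] using deriv_fun_mul (diff_sliceT hf p.1 p.2) (diff_sliceT hg p.1 p.2)

lemma px_add (hf : ContDiff ℝ (⊤ : ℕ∞) f) (hg : ContDiff ℝ (⊤ : ℕ∞) g) (p : ℝ × ℝ) :
    px (fun q => f q + g q) p = px f p + px g p := by
  simpa [px] using deriv_fun_add (diff_sliceX hf p.1 p.2) (diff_sliceX hg p.1 p.2)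

lemma px_sub (hf : ContDiff ℝ (⊤ : ℕ∞) f) (hg : ContDiff ℝ (⊤ : ℕ∞) g) (p : ℝ × ℝ) :
    px (fun q => f q - g q) p = px f p - px g p := by
  simpa [px] using deriv_fun_sub (diff_sliceX hf p.1 p.2) (diff_sliceX hg p.1 p.2)

lemma pt_sub (hf : ContDiff ℝ (⊤ : ℕ∞) f) (hg : ContDiff ℝ (⊤ : ℕ∞) g) (p : ℝ × ℝ) :
    pt (fun q => f q - g q) p = pt f p - pt g p := by
  simpa [pt] using deriv_fun_sub (diff_sliceT hf p.1 p.2) (diff_sliceT hg p.1 p.2)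

end helpers

/-- Lax pair for the commutator mKdV-type equation `uₜ = [[u,uₓ],u] + uₓₓₓ`. -/
theorem mkdv_comm_lax (u ψ φ : ℝ × ℝ → Quaternion ℝ)
    (hu : ContDiff ℝ (⊤ : ℕ∞) u) (hψ : ContDiff ℝ (⊤ : ℕ∞) ψ)
    (hut : ∀ p, pt u p = ((u p * px u p - px u p * u p) * u p
      - u p * (u p * px u p - px u p * u p)) + px (px (px u)) p)
    (hψt : ∀ p, pt ψ p = px (px u) p * ψ p + (u p * px u p - px u p * u p) * ψ p)
    (hφ : φ = fun p => px ψ p - u p * ψ p) :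
    ∀ p, pt φ p = px (px u) p * φ p + (u p * px u p - px u p * u p) * φ p := by
  subst hφ
  intro p
  have hux : ContDiff ℝ (⊤ : ℕ∞) (px u) := contDiff_px hu
  have huxx : ContDiff ℝ (⊤ : ℕ∞) (px (px u)) := contDiff_px hux
  have hψx : ContDiff ℝ (⊤ : ℕ∞) (px ψ) := contDiff_px hψ
  have hcomm : ContDiff ℝ (⊤ : ℕ∞) (fun q => u q * px u q - px u q * u q) :=
    (hu.mul hux).sub (hux.mul hu)
  -- step 1
  rw [pt_sub hψx (hu.mul hψ), pt_mul hu hψ, pt_px_comm hψ]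
  -- step 3 : rewrite pt ψ as a function
  have hA : pt ψ = fun q => px (px u) q * ψ q + (u q * px u q - px u q * u q) * ψ q :=
    funext hψt
  rw [hA]
  rw [px_add (huxx.mul hψ) (hcomm.mul hψ), px_mul huxx hψ, px_mul hcomm hψ,
      px_sub (hu.mul hux) (hux.mul hu), px_mul hu hux, px_mul hux hu,
      hut p]
  beta_reduce
  noncomm_ring
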